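/- Let d ≠ 0, f, ζ ∈ ℝ and let a ∈ C²([0,2π], ℝ²) be a 2π-periodic solution of the stationary Lugiato-Lefever system. Then ‖a‖_{L^∞} ≤ |f| (1 + 12π² f² |d|^{-1}). -/

import Mathlib

/-!
Write `g = a₁² + a₂²` and `W = a₁a₂' − a₂a₁'` for a `T`-periodic solution. The equations give
`W' = (f a₁ − g)/d`, and both `W` and `|a'|² − g'W` are derivatives of periodic functions.
Integrating over a period: `∫ g = f ∫ a₁`, so Cauchy–Schwarz yields `‖a‖²_{L²} ≤ T f²`; `W` has
mean zero, so `|W| ≤ ½ ∫ |W'| ≤ T f²/|d|`; and `∫ |a'|² = ∫ g'W ≤ ‖W‖_∞ · 2‖a‖_{L²}‖a'‖_{L²}`,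
whence `|d| ‖a'‖_{L²} ≤ 2 T^{3/2} |f|³`. Finally `g(x) ≤ ⨍ g + ∫ |g'| ≤ f² + 2‖a‖_{L²}‖a'‖_{L²}
≤ f² + 4T²f⁴/|d|`, so `|a(x)| ≤ |f| (1 + 2T²f²/|d|)`, and `2(2π)² = 8π² ≤ 12π²`.
-/

open Real intervalIntegral

theorem Function.Periodic.deriv {u : ℝ → ℝ} {c : ℝ} (h : Function.Periodic u c) :
    Function.Periodic (deriv u) c := fun x => by
  rw [← deriv_comp_add_const, funext h]

theorem ContDiff.differentiable_deriv_of_two {u : ℝ → ℝ} (hu : ContDiff ℝ 2 u) :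
    Differentiable ℝ (deriv u) :=
  (hu.iterate_deriv' 1 1).differentiable one_ne_zero

section IntervalIntegral

variable {a b : ℝ} {u v : ℝ → ℝ}

theorem intervalIntegral_mul_sq_le (hab : a ≤ b) (hu : Continuous u) (hv : Continuous v) :
    (∫ x in a..b, u x * v x) ^ 2 ≤ (∫ x in a..b, u x ^ 2) * ∫ x in a..b, v x ^ 2 := by
  have hquad : ∀ t : ℝ, 0 ≤ (∫ x in a..b, v x ^ 2) * (t * t)
      + 2 * (∫ x in a..b, u x * v x) * t + ∫ x in a..b, u x ^ 2 := fun t => by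
    have h : 0 ≤ ∫ x in a..b, (t * v x + u x) ^ 2 := integral_nonneg hab fun x _ => sq_nonneg _
    have hexp : ∀ x, (t * v x + u x) ^ 2 = t * t * v x ^ 2 + 2 * t * (u x * v x) + u x ^ 2 :=
      fun x => by ring
    simp only [hexp] at h
    have hi {w : ℝ → ℝ} (hw : Continuous w) : IntervalIntegrable w MeasureTheory.volume a b :=
      hw.intervalIntegrable a b
    rw [integral_add (hi (by fun_prop)) (hi (by fun_prop)),
      integral_add (hi (by fun_prop)) (hi (by fun_prop)), integral_const_mul,
      integral_const_mul] at h
    linarith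
  have := discrim_le_zero hquad
  rw [discrim] at this
  nlinarith

theorem intervalIntegral_mul_le_sqrt_mul_sqrt (hab : a ≤ b) (hu : Continuous u)
    (hv : Continuous v) :
    ∫ x in a..b, u x * v x ≤ √(∫ x in a..b, u x ^ 2) * √(∫ x in a..b, v x ^ 2) := by
  rw [← Real.sqrt_mul (integral_nonneg hab fun x _ => sq_nonneg _)]
  exact Real.le_sqrt_of_sq_le (intervalIntegral_mul_sq_le hab hu hv)

end IntervalIntegral

section FundamentalTheorem

variable {a b T : ℝ} {u u' : ℝ → ℝ}

theorem Function.Periodic.integral_deriv_eq_zero (hu : Function.Periodic u T)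
    (hderiv : ∀ x, HasDerivAt u (u' x) x) (hu' : Continuous u') : ∫ x in 0..T, u' x = 0 := by
  rw [integral_eq_sub_of_hasDerivAt (fun x _ => hderiv x) (hu'.intervalIntegrable _ _),
    sub_eq_zero]
  simpa using hu 0

theorem abs_sub_le_integral_abs_deriv (hderiv : ∀ x, HasDerivAt u (u' x) x)
    (hu' : Continuous u') {x y : ℝ} (hxy : x ≤ y) : |u y - u x| ≤ ∫ t in x..y, |u' t| := by
  rw [← integral_eq_sub_of_hasDerivAt (fun t _ => hderiv t) (hu'.intervalIntegrable x y)]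
  exact abs_integral_le_integral_abs hxy

theorem le_integral_div_add_integral_abs_deriv (hderiv : ∀ x, HasDerivAt u (u' x) x)
    (hu' : Continuous u') (hab : a < b) {x : ℝ} (hx : x ∈ Set.Icc a b) :
    u x ≤ (∫ t in a..b, u t) / (b - a) + ∫ t in a..b, |u' t| := by
  have hu : Continuous u := continuous_iff_continuousAt.2 fun x => (hderiv x).continuousAt
  obtain ⟨c, hc, hmean⟩ := exists_eq_interval_average hab.ne hu.continuousOn
  rw [interval_average_eq_div] at hmean
  rw [Set.uIoo_of_le hab.le] at hc
  have hmono {y z : ℝ} (hay : a ≤ y) (hyz : y ≤ z) (hzb : z ≤ b) :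
      ∫ t in y..z, |u' t| ≤ ∫ t in a..b, |u' t| :=
    integral_mono_interval hay hyz hzb (Filter.Eventually.of_forall fun _ => abs_nonneg _)
      (hu'.abs.intervalIntegrable a b)
  have hosc : |u x - u c| ≤ ∫ t in a..b, |u' t| := by
    rcases le_total c x with hcx | hxc
    · exact (abs_sub_le_integral_abs_deriv hderiv hu' hcx).trans (hmono hc.1.le hcx hx.2)
    · rw [abs_sub_comm]
      exact (abs_sub_le_integral_abs_deriv hderiv hu' hxc).trans (hmono hx.1 hxc hc.2.le)
  linarith [le_abs_self (u x - u c)]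

theorem Function.Periodic.two_mul_abs_le_integral_abs_deriv (hu : Function.Periodic u T)
    (hT : 0 < T) (hderiv : ∀ x, HasDerivAt u (u' x) x) (hu' : Continuous u')
    (hmean : ∫ t in 0..T, u t = 0) (x : ℝ) : 2 * |u x| ≤ ∫ t in 0..T, |u' t| := by
  have hcont : Continuous u := continuous_iff_continuousAt.2 fun x => (hderiv x).continuousAt
  obtain ⟨x₀, -, hzero⟩ := exists_eq_interval_average hT.ne hcont.continuousOn
  rw [interval_average_eq_div, hmean, zero_div] at hzero
  obtain ⟨y, hy, hxy⟩ := hu.exists_mem_Ico hT x x₀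
  have hleft := abs_sub_le_integral_abs_deriv hderiv hu' hy.1
  have hright := abs_sub_le_integral_abs_deriv hderiv hu' hy.2.le
  rw [hzero, sub_zero] at hleft
  rw [hu x₀, hzero, zero_sub, abs_neg] at hright
  have hper' : Function.Periodic (fun t => |u' t|) T := fun t => by
    simp only [← (hderiv _).deriv, hu.deriv t]
  rw [hxy, two_mul, ← zero_add T, ← hper'.intervalIntegral_add_eq x₀ 0,
    ← integral_add_adjacent_intervals (hu'.abs.intervalIntegrable x₀ y)
      (hu'.abs.intervalIntegrable y (x₀ + T))]
  exact add_le_add hleft hright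

end FundamentalTheorem

namespace LugiatoLefever

variable {d ζ f T : ℝ} {a1 a2 b1 b2 : ℝ → ℝ}

def sqNorm (a1 a2 : ℝ → ℝ) (x : ℝ) : ℝ := a1 x ^ 2 + a2 x ^ 2

noncomputable def wronskian (a1 a2 : ℝ → ℝ) (x : ℝ) : ℝ :=
  a1 x * deriv a2 x - a2 x * deriv a1 x

theorem sqNorm_nonneg (x : ℝ) : 0 ≤ sqNorm a1 a2 x := by
  unfold sqNorm
  positivity

@[fun_prop]
theorem continuous_sqNorm (h1 : Continuous a1) (h2 : Continuous a2) :
    Continuous (sqNorm a1 a2) := by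
  unfold sqNorm
  fun_prop

theorem periodic_sqNorm (h1 : Function.Periodic a1 T) (h2 : Function.Periodic a2 T) :
    Function.Periodic (sqNorm a1 a2) T := fun x => by
  simp only [sqNorm, h1 x, h2 x]

theorem hasDerivAt_sqNorm {x : ℝ} (h1 : DifferentiableAt ℝ a1 x)
    (h2 : DifferentiableAt ℝ a2 x) :
    HasDerivAt (sqNorm a1 a2) (2 * (a1 x * deriv a1 x + a2 x * deriv a2 x)) x :=
  ((h1.hasDerivAt.pow 2).add (h2.hasDerivAt.pow 2)).congr_deriv (by ring)

theorem integral_abs_mul_add_mul_le (hT : 0 ≤ T) (h1 : Continuous a1) (h2 : Continuous a2)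
    (h1' : Continuous b1) (h2' : Continuous b2) :
    ∫ x in 0..T, |a1 x * b1 x + a2 x * b2 x|
      ≤ √(∫ x in 0..T, sqNorm a1 a2 x) * √(∫ x in 0..T, sqNorm b1 b2 x) := by
  have hpt (x : ℝ) :
      |a1 x * b1 x + a2 x * b2 x| ≤ √(sqNorm a1 a2 x) * √(sqNorm b1 b2 x) := by
    rw [← Real.sqrt_mul (sqNorm_nonneg x)]
    apply Real.abs_le_sqrt
    unfold sqNorm
    nlinarith [sq_nonneg (a1 x * b2 x - a2 x * b1 x)]
  have hsq {u1 u2 : ℝ → ℝ} :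
      ∫ x in 0..T, √(sqNorm u1 u2 x) ^ 2 = ∫ x in 0..T, sqNorm u1 u2 x :=
    integral_congr fun x _ => Real.sq_sqrt (sqNorm_nonneg x)
  have hcont {u1 u2 : ℝ → ℝ} (hu1 : Continuous u1) (hu2 : Continuous u2) :
      Continuous fun x => √(sqNorm u1 u2 x) := by
    unfold sqNorm
    fun_prop
  calc ∫ x in 0..T, |a1 x * b1 x + a2 x * b2 x|
      ≤ ∫ x in 0..T, √(sqNorm a1 a2 x) * √(sqNorm b1 b2 x) :=
        integral_mono_on hT (Continuous.intervalIntegrable (by fun_prop) _ _)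
          (((hcont h1 h2).mul (hcont h1' h2')).intervalIntegrable _ _) fun x _ => hpt x
    _ ≤ _ := by
        rw [← hsq, ← hsq]
        exact intervalIntegral_mul_le_sqrt_mul_sqrt hT (hcont h1 h2) (hcont h1' h2')

theorem integral_abs_le_sqrt_mul_sqrt (hT : 0 ≤ T) (h1 : Continuous a1) (h2 : Continuous a2) :
    ∫ x in 0..T, |a1 x| ≤ √T * √(∫ x in 0..T, sqNorm a1 a2 x) := by
  have hsq : ∫ x in 0..T, |a1 x| ^ 2 ≤ ∫ x in 0..T, sqNorm a1 a2 x :=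
    integral_mono_on hT (Continuous.intervalIntegrable (by fun_prop) _ _)
      ((continuous_sqNorm h1 h2).intervalIntegrable _ _)
      fun x _ => by simp only [sqNorm, sq_abs]; nlinarith [sq_nonneg (a2 x)]
  calc ∫ x in 0..T, |a1 x| = ∫ x in 0..T, |a1 x| * 1 := by simp only [mul_one]
    _ ≤ √(∫ x in 0..T, |a1 x| ^ 2) * √(∫ _ in 0..T, (1 : ℝ) ^ 2) :=
        intervalIntegral_mul_le_sqrt_mul_sqrt hT (by fun_prop) continuous_const
    _ ≤ √T * √(∫ x in 0..T, sqNorm a1 a2 x) := by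
        rw [mul_comm]
        gcongr
        simp

structure IsPeriodicSolution (d ζ f T : ℝ) (a1 a2 : ℝ → ℝ) : Prop where
  contDiff_fst : ContDiff ℝ 2 a1
  contDiff_snd : ContDiff ℝ 2 a2
  periodic_fst : Function.Periodic a1 T
  periodic_snd : Function.Periodic a2 T
  eq_fst : ∀ x, -d * deriv (deriv a1) x = -(a2 x) - ζ * a1 x + (a1 x ^ 2 + a2 x ^ 2) * a1 x
  eq_snd : ∀ x, -d * deriv (deriv a2) x = a1 x - ζ * a2 x + (a1 x ^ 2 + a2 x ^ 2) * a2 x - f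

namespace IsPeriodicSolution

theorem hasDerivAt_fst (s : IsPeriodicSolution d ζ f T a1 a2) (x : ℝ) :
    HasDerivAt a1 (deriv a1 x) x :=
  (s.contDiff_fst.differentiable two_ne_zero x).hasDerivAt

theorem hasDerivAt_snd (s : IsPeriodicSolution d ζ f T a1 a2) (x : ℝ) :
    HasDerivAt a2 (deriv a2 x) x :=
  (s.contDiff_snd.differentiable two_ne_zero x).hasDerivAt

theorem hasDerivAt_deriv_fst (s : IsPeriodicSolution d ζ f T a1 a2) (hd : d ≠ 0) (x : ℝ) :
    HasDerivAt (deriv a1) ((a2 x + ζ * a1 x - sqNorm a1 a2 x * a1 x) / d) x := by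
  refine (s.contDiff_fst.differentiable_deriv_of_two x).hasDerivAt.congr_deriv ?_
  rw [eq_div_iff hd, sqNorm]
  linear_combination -s.eq_fst x

theorem hasDerivAt_deriv_snd (s : IsPeriodicSolution d ζ f T a1 a2) (hd : d ≠ 0) (x : ℝ) :
    HasDerivAt (deriv a2) ((-a1 x + ζ * a2 x - sqNorm a1 a2 x * a2 x + f) / d) x := by
  refine (s.contDiff_snd.differentiable_deriv_of_two x).hasDerivAt.congr_deriv ?_
  rw [eq_div_iff hd, sqNorm]
  linear_combination -s.eq_snd x

theorem continuous_fst (s : IsPeriodicSolution d ζ f T a1 a2) : Continuous a1 :=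
  s.contDiff_fst.continuous

theorem continuous_snd (s : IsPeriodicSolution d ζ f T a1 a2) : Continuous a2 :=
  s.contDiff_snd.continuous

theorem continuous_deriv_fst (s : IsPeriodicSolution d ζ f T a1 a2) : Continuous (deriv a1) :=
  s.contDiff_fst.continuous_deriv one_le_two

theorem continuous_deriv_snd (s : IsPeriodicSolution d ζ f T a1 a2) : Continuous (deriv a2) :=
  s.contDiff_snd.continuous_deriv one_le_two

theorem hasDerivAt_sqNorm (s : IsPeriodicSolution d ζ f T a1 a2) (x : ℝ) :
    HasDerivAt (sqNorm a1 a2) (2 * (a1 x * deriv a1 x + a2 x * deriv a2 x)) x :=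
  LugiatoLefever.hasDerivAt_sqNorm (s.hasDerivAt_fst x).differentiableAt
    (s.hasDerivAt_snd x).differentiableAt

theorem hasDerivAt_wronskian (s : IsPeriodicSolution d ζ f T a1 a2) (hd : d ≠ 0) (x : ℝ) :
    HasDerivAt (wronskian a1 a2) ((f * a1 x - sqNorm a1 a2 x) / d) x := by
  refine (((s.hasDerivAt_fst x).mul (s.hasDerivAt_deriv_snd hd x)).sub
    ((s.hasDerivAt_snd x).mul (s.hasDerivAt_deriv_fst hd x))).congr_deriv ?_
  unfold sqNorm
  field_simp
  ring

theorem continuous_wronskian (s : IsPeriodicSolution d ζ f T a1 a2) :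
    Continuous (wronskian a1 a2) := by
  have := s.continuous_fst; have := s.continuous_snd
  have := s.continuous_deriv_fst; have := s.continuous_deriv_snd
  unfold wronskian
  fun_prop

theorem periodic_sqNorm (s : IsPeriodicSolution d ζ f T a1 a2) :
    Function.Periodic (sqNorm a1 a2) T :=
  LugiatoLefever.periodic_sqNorm s.periodic_fst s.periodic_snd

theorem periodic_wronskian (s : IsPeriodicSolution d ζ f T a1 a2) :
    Function.Periodic (wronskian a1 a2) T := fun x => by
  simp only [wronskian, s.periodic_fst x, s.periodic_snd x, s.periodic_fst.deriv x,
    s.periodic_snd.deriv x]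

theorem integral_sqNorm_eq (s : IsPeriodicSolution d ζ f T a1 a2) (hd : d ≠ 0) :
    ∫ x in 0..T, sqNorm a1 a2 x = f * ∫ x in 0..T, a1 x := by
  have := s.continuous_fst; have := s.continuous_snd
  have h := s.periodic_wronskian.integral_deriv_eq_zero (s.hasDerivAt_wronskian hd)
    (by fun_prop)
  rw [integral_div, div_eq_zero_iff, or_iff_left hd,
    integral_sub (Continuous.intervalIntegrable (by fun_prop) _ _)
      (Continuous.intervalIntegrable (by fun_prop) _ _), integral_const_mul, sub_eq_zero] at h
  exact h.symm

theorem integral_wronskian_eq_zero (s : IsPeriodicSolution d ζ f T a1 a2) :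
    ∫ x in 0..T, wronskian a1 a2 x = 0 := by
  -- Multiplying the equations by `a₁'`, `a₂'` and adding shows `H' = W`.
  set H : ℝ → ℝ := fun x => -(d / 2) * sqNorm (deriv a1) (deriv a2) x
    + ζ / 2 * sqNorm a1 a2 x - sqNorm a1 a2 x ^ 2 / 4 + f * a2 x
  have hH : Function.Periodic H T := fun x => by
    simp only [H, s.periodic_snd x, s.periodic_sqNorm x,
      LugiatoLefever.periodic_sqNorm s.periodic_fst.deriv s.periodic_snd.deriv x]
  have hderiv (x : ℝ) : HasDerivAt H (wronskian a1 a2 x) x := by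
    have hb := LugiatoLefever.hasDerivAt_sqNorm (s.contDiff_fst.differentiable_deriv_of_two x)
      (s.contDiff_snd.differentiable_deriv_of_two x)
    have ha := s.hasDerivAt_sqNorm x
    refine ((((hb.const_mul _).add (ha.const_mul _)).sub ((ha.pow 2).div_const 4)).add
      ((s.hasDerivAt_snd x).const_mul f)).congr_deriv ?_
    simp only [wronskian, sqNorm]
    linear_combination deriv a1 x * s.eq_fst x + deriv a2 x * s.eq_snd x
  exact hH.integral_deriv_eq_zero hderiv s.continuous_wronskian

theorem integral_sqNorm_deriv_eq (s : IsPeriodicSolution d ζ f T a1 a2) (hd : d ≠ 0) :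
    ∫ x in 0..T, sqNorm (deriv a1) (deriv a2) x
      = ∫ x in 0..T, 2 * (a1 x * deriv a1 x + a2 x * deriv a2 x) * wronskian a1 a2 x := by
  set F : ℝ → ℝ := fun x => a1 x * deriv a1 x + a2 x * deriv a2 x
    - (sqNorm a1 a2 x - ζ) * wronskian a1 a2 x - f * deriv a1 x
  have hF : Function.Periodic F T := fun x => by
    simp only [F, s.periodic_fst x, s.periodic_snd x, s.periodic_sqNorm x,
      s.periodic_wronskian x, s.periodic_fst.deriv x, s.periodic_snd.deriv x]
  have hderiv (x : ℝ) : HasDerivAt F (sqNorm (deriv a1) (deriv a2) x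
      - 2 * (a1 x * deriv a1 x + a2 x * deriv a2 x) * wronskian a1 a2 x) x := by
    have hc1 := s.hasDerivAt_deriv_fst hd x
    have hW := s.hasDerivAt_wronskian hd x
    refine (((((s.hasDerivAt_fst x).mul hc1).add ((s.hasDerivAt_snd x).mul
      (s.hasDerivAt_deriv_snd hd x))).sub (((s.hasDerivAt_sqNorm x).sub_const ζ).mul hW)).sub
      (hc1.const_mul f)).congr_deriv ?_
    simp only [sqNorm]
    field_simp
    ring
  have := s.continuous_fst; have := s.continuous_snd
  have := s.continuous_deriv_fst; have := s.continuous_deriv_snd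
  have := s.continuous_wronskian
  have h := hF.integral_deriv_eq_zero hderiv (by fun_prop)
  rwa [integral_sub (Continuous.intervalIntegrable (by fun_prop) _ _)
      (Continuous.intervalIntegrable (by fun_prop) _ _), sub_eq_zero] at h

theorem sqrt_integral_sqNorm_le (s : IsPeriodicSolution d ζ f T a1 a2) (hd : d ≠ 0)
    (hT : 0 ≤ T) : √(∫ x in 0..T, sqNorm a1 a2 x) ≤ √T * |f| := by
  set L := √(∫ x in 0..T, sqNorm a1 a2 x)
  have hL : L * L ≤ √T * |f| * L := by
    rw [Real.mul_self_sqrt (integral_nonneg hT fun x _ => sqNorm_nonneg x),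
      s.integral_sqNorm_eq hd]
    calc f * ∫ x in 0..T, a1 x ≤ |f| * |∫ x in 0..T, a1 x| := by
          rw [← abs_mul]; exact le_abs_self _
      _ ≤ |f| * ∫ x in 0..T, |a1 x| := by gcongr; exact abs_integral_le_integral_abs hT
      _ ≤ |f| * (√T * L) := by
          gcongr; exact integral_abs_le_sqrt_mul_sqrt hT s.continuous_fst s.continuous_snd
      _ = √T * |f| * L := by ring
  have hL0 : 0 ≤ L := Real.sqrt_nonneg _
  nlinarith [mul_nonneg (Real.sqrt_nonneg T) (abs_nonneg f)]

theorem integral_sqNorm_le (s : IsPeriodicSolution d ζ f T a1 a2) (hd : d ≠ 0) (hT : 0 ≤ T) :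
    ∫ x in 0..T, sqNorm a1 a2 x ≤ T * f ^ 2 := by
  have h := (Real.sqrt_le_left (by positivity)).1 (s.sqrt_integral_sqNorm_le hd hT)
  rwa [mul_pow, Real.sq_sqrt hT, sq_abs] at h

theorem integral_abs_fst_le (s : IsPeriodicSolution d ζ f T a1 a2) (hd : d ≠ 0) (hT : 0 ≤ T) :
    ∫ x in 0..T, |a1 x| ≤ T * |f| :=
  calc ∫ x in 0..T, |a1 x| ≤ √T * √(∫ x in 0..T, sqNorm a1 a2 x) :=
        integral_abs_le_sqrt_mul_sqrt hT s.continuous_fst s.continuous_snd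
    _ ≤ √T * (√T * |f|) := by gcongr; exact s.sqrt_integral_sqNorm_le hd hT
    _ = T * |f| := by rw [← mul_assoc, Real.mul_self_sqrt hT]

theorem integral_abs_deriv_wronskian_le (s : IsPeriodicSolution d ζ f T a1 a2) (hd : d ≠ 0)
    (hT : 0 ≤ T) :
    ∫ x in 0..T, |(f * a1 x - sqNorm a1 a2 x) / d| ≤ 2 * (T * f ^ 2 / |d|) := by
  have := s.continuous_fst; have := s.continuous_snd
  calc ∫ x in 0..T, |(f * a1 x - sqNorm a1 a2 x) / d|
      ≤ ∫ x in 0..T, (|f| * |a1 x| + sqNorm a1 a2 x) / |d| := by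
        refine integral_mono_on hT (Continuous.intervalIntegrable (by fun_prop) _ _)
          (Continuous.intervalIntegrable (by fun_prop) _ _) fun x _ => ?_
        rw [abs_div]
        gcongr
        exact (abs_sub _ _).trans_eq (by rw [abs_mul, abs_of_nonneg (sqNorm_nonneg x)])
    _ = (|f| * (∫ x in 0..T, |a1 x|) + ∫ x in 0..T, sqNorm a1 a2 x) / |d| := by
        rw [integral_div, integral_add (Continuous.intervalIntegrable (by fun_prop) _ _)
          (Continuous.intervalIntegrable (by fun_prop) _ _), integral_const_mul]
    _ ≤ (|f| * (T * |f|) + T * f ^ 2) / |d| := by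
        gcongr
        · exact s.integral_abs_fst_le hd hT
        · exact s.integral_sqNorm_le hd hT
    _ = 2 * (T * f ^ 2 / |d|) := by rw [← sq_abs f]; ring

theorem abs_wronskian_le (s : IsPeriodicSolution d ζ f T a1 a2) (hd : d ≠ 0) (hT : 0 < T)
    (x : ℝ) : |wronskian a1 a2 x| ≤ T * f ^ 2 / |d| := by
  have := s.continuous_fst; have := s.continuous_snd
  have h := s.periodic_wronskian.two_mul_abs_le_integral_abs_deriv hT
    (s.hasDerivAt_wronskian hd) (by fun_prop) s.integral_wronskian_eq_zero x
  have := h.trans (s.integral_abs_deriv_wronskian_le hd hT.le)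
  linarith

theorem sqrt_integral_sqNorm_deriv_le (s : IsPeriodicSolution d ζ f T a1 a2) (hd : d ≠ 0)
    (hT : 0 < T) :
    √(∫ x in 0..T, sqNorm (deriv a1) (deriv a2) x) ≤ 2 * T * √T * |f| ^ 3 / |d| := by
  have := s.continuous_fst; have := s.continuous_snd
  have := s.continuous_deriv_fst; have := s.continuous_deriv_snd
  have := s.continuous_wronskian
  set X := ∫ x in 0..T, sqNorm (deriv a1) (deriv a2) x
  set L := √(∫ x in 0..T, sqNorm a1 a2 x)
  set M := T * f ^ 2 / |d|
  have hX : √X * √X ≤ 2 * M * L * √X := by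
    rw [Real.mul_self_sqrt (integral_nonneg hT.le fun x _ => sqNorm_nonneg x),
      s.integral_sqNorm_deriv_eq hd]
    calc ∫ x in 0..T, 2 * (a1 x * deriv a1 x + a2 x * deriv a2 x) * wronskian a1 a2 x
        ≤ ∫ x in 0..T, 2 * M * |a1 x * deriv a1 x + a2 x * deriv a2 x| := by
          refine integral_mono_on hT.le (Continuous.intervalIntegrable (by fun_prop) _ _)
            (Continuous.intervalIntegrable (by fun_prop) _ _) fun x _ => ?_
          rw [mul_right_comm]
          refine (le_abs_self _).trans ?_
          rw [abs_mul, abs_mul, abs_two]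
          have := s.abs_wronskian_le hd hT x
          gcongr
      _ ≤ 2 * M * (L * √X) := by
          rw [integral_const_mul]
          gcongr
          exact integral_abs_mul_add_mul_le hT.le s.continuous_fst s.continuous_snd
            s.continuous_deriv_fst s.continuous_deriv_snd
      _ = 2 * M * L * √X := by ring
  have hL := s.sqrt_integral_sqNorm_le hd hT.le
  have hX0 : 0 ≤ √X := Real.sqrt_nonneg _
  have hML : 0 ≤ 2 * M * L := by positivity
  calc √X ≤ 2 * M * L := by nlinarith
    _ ≤ 2 * M * (√T * |f|) := by gcongr
    _ = 2 * T * √T * |f| ^ 3 / |d| := by simp only [M]; rw [← sq_abs f]; ring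

theorem integral_abs_deriv_sqNorm_le (s : IsPeriodicSolution d ζ f T a1 a2) (hd : d ≠ 0)
    (hT : 0 < T) :
    ∫ x in 0..T, |2 * (a1 x * deriv a1 x + a2 x * deriv a2 x)| ≤ 4 * T ^ 2 * f ^ 4 / |d| := by
  simp only [abs_mul, abs_two]
  rw [integral_const_mul]
  calc 2 * ∫ x in 0..T, |a1 x * deriv a1 x + a2 x * deriv a2 x|
      ≤ 2 * (√(∫ x in 0..T, sqNorm a1 a2 x)
          * √(∫ x in 0..T, sqNorm (deriv a1) (deriv a2) x)) := by
        gcongr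
        exact integral_abs_mul_add_mul_le hT.le s.continuous_fst s.continuous_snd
          s.continuous_deriv_fst s.continuous_deriv_snd
    _ ≤ 2 * ((√T * |f|) * (2 * T * √T * |f| ^ 3 / |d|)) := by
        gcongr
        · exact s.sqrt_integral_sqNorm_le hd hT.le
        · exact s.sqrt_integral_sqNorm_deriv_le hd hT
    _ = 4 * T ^ 2 * f ^ 4 / |d| := by
        rw [← Even.pow_abs ⟨2, rfl⟩ f]
        field_simp
        rw [show √T ^ 2 = T from Real.sq_sqrt hT.le]
        ring

theorem sqNorm_le (s : IsPeriodicSolution d ζ f T a1 a2) (hd : d ≠ 0) (hT : 0 < T) {x : ℝ}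
    (hx : x ∈ Set.Icc 0 T) : sqNorm a1 a2 x ≤ f ^ 2 + 4 * T ^ 2 * f ^ 4 / |d| := by
  have := s.continuous_fst; have := s.continuous_snd
  have := s.continuous_deriv_fst; have := s.continuous_deriv_snd
  have h := le_integral_div_add_integral_abs_deriv s.hasDerivAt_sqNorm (by fun_prop) hT hx
  rw [sub_zero] at h
  have hmean : (∫ t in 0..T, sqNorm a1 a2 t) / T ≤ f ^ 2 := by
    rw [div_le_iff₀ hT, mul_comm]
    exact s.integral_sqNorm_le hd hT.le
  linarith [s.integral_abs_deriv_sqNorm_le hd hT]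

theorem sqrt_sqNorm_le (s : IsPeriodicSolution d ζ f T a1 a2) (hd : d ≠ 0) (hT : 0 < T)
    {x : ℝ} (hx : x ∈ Set.Icc 0 T) :
    √(sqNorm a1 a2 x) ≤ |f| * (1 + 2 * T ^ 2 * f ^ 2 / |d|) := by
  rw [Real.sqrt_le_left (by positivity)]
  refine (s.sqNorm_le hd hT hx).trans ?_
  have : 0 ≤ f ^ 2 * (2 * T ^ 2 * f ^ 2 / |d|) ^ 2 := by positivity
  rw [mul_pow, sq_abs]
  linarith [show f ^ 2 * (1 + 2 * T ^ 2 * f ^ 2 / |d|) ^ 2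
    = f ^ 2 + 4 * T ^ 2 * f ^ 4 / |d| + f ^ 2 * (2 * T ^ 2 * f ^ 2 / |d|) ^ 2 by ring]

end IsPeriodicSolution

end LugiatoLefever

theorem stmt_3 (d ζ f : ℝ) (hd : d ≠ 0) (a1 a2 : ℝ → ℝ)
    (ha1 : ContDiff ℝ 2 a1) (ha2 : ContDiff ℝ 2 a2)
    (hp1 : Function.Periodic a1 (2 * π)) (hp2 : Function.Periodic a2 (2 * π))
    (heq1 : ∀ x, -d * deriv (deriv a1) x
      = -(a2 x) - ζ * a1 x + (a1 x ^ 2 + a2 x ^ 2) * a1 x)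
    (heq2 : ∀ x, -d * deriv (deriv a2) x
      = a1 x - ζ * a2 x + (a1 x ^ 2 + a2 x ^ 2) * a2 x - f) :
    ∀ x ∈ Set.Icc (0:ℝ) (2 * π),
      Real.sqrt (a1 x ^ 2 + a2 x ^ 2) ≤ |f| * (1 + 12 * π ^ 2 * f ^ 2 * |d|⁻¹) := by
  intro x hx
  have s : LugiatoLefever.IsPeriodicSolution d ζ f (2 * π) a1 a2 := ⟨ha1, ha2, hp1, hp2, heq1, heq2⟩
  refine (s.sqrt_sqNorm_le hd (by positivity) hx).trans ?_
  rw [← div_eq_mul_inv]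
  gcongr |f| * (1 + ?_ * _ / _)
  nlinarith [pi_pos]
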